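/- Let C be a well-powered category with wide pullbacks and let F : C ⥤ C preserve monomorphisms. Then F preserves intersections (the induced maps on subobject lattices preserve arbitrary infima) if and only if for every morphism f : X ⟶ F.obj Y the next-time operator ○_f : Subobject Y → Subobject X has a left adjoint, i.e., there exists a map l : Subobject X → Subobject Y forming a Galois connection with ○_f (l m ≤ n ↔ m ≤ ○_f n). -/

import Mathlib

open CategoryTheory CategoryTheory.Limits

universe w v u

variable {C : Type u} [Category.{v} C]

/-- A functor preserves monomorphisms. -/
def PreservesMonos (F : C ⥤ C) : Prop :=
  ∀ ⦃X Y : C⦄ (f : X ⟶ Y), Mono f → Mono (F.map f)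

/-- The induced map on subobject lattices of a mono-preserving functor. -/
noncomputable def subMap {F : C ⥤ C} (hF : PreservesMonos F) {Y : C} (m : Subobject Y) :
    Subobject (F.obj Y) :=
  letI : Mono (F.map m.arrow) := hF m.arrow inferInstance
  Subobject.mk (F.map m.arrow)

/-- A mono-preserving functor preserves intersections if the induced maps on subobject
lattices preserve arbitrary infima. -/
def PreservesIntersections [WellPowered.{v} C] [HasWidePullbacks.{v} C] {F : C ⥤ C}
    (hF : PreservesMonos F) : Prop :=
  ∀ ⦃Y : C⦄ (s : Set (Subobject Y)), subMap hF (sInf s) = sInf (subMap hF '' s)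

/-- The "next time" operator of a morphism `f : X ⟶ F.obj Y`. -/
noncomputable def nextTime [HasPullbacks C] {F : C ⥤ C} (hF : PreservesMonos F)
    {X Y : C} (f : X ⟶ F.obj Y) (n : Subobject Y) : Subobject X :=
  (Subobject.pullback f).obj (subMap hF n)

/-- The "previous time" operator of a morphism `f : X ⟶ F.obj Y`: it sends a subobject `m` of
`X` to the least subobject `n` of `Y` such that `m.arrow ≫ f` factors through `F.map n.arrow`. -/
noncomputable def prevTime [WellPowered.{v} C] [HasWidePullbacks.{v} C] (F : C ⥤ C)
    {X Y : C} (f : X ⟶ F.obj Y) (m : Subobject X) : Subobject Y :=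
  sInf {n : Subobject Y | ∃ g : (m : C) ⟶ F.obj (n : C), g ≫ F.map n.arrow = m.arrow ≫ f}

/-- An `I`-pointed coalgebra `(X, c, i)` is reachable if every monomorphic homomorphism of
`I`-pointed coalgebras into it is an isomorphism. -/
def Reachable (F : C ⥤ C) {I X : C} (c : X ⟶ F.obj X) (i : I ⟶ X) : Prop :=
  ∀ ⦃S : C⦄ (s : S ⟶ F.obj S) (iS : I ⟶ S) (m : S ⟶ X),
    Mono m → s ≫ F.map m = m ≫ c → iS ≫ m = i → IsIso m

/-! The next-time operator factors as `○_f = f^* ∘ F_*`, where `F_* = subMap hF` and pullback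
`f^*` preserves all infima. If `F_*` preserves infima then so does `○_f`, and an
infimum-preserving map of complete semilattices has the left adjoint
`m ↦ ⨅ {n | m ≤ ○_f n}`. Conversely, a subobject `P` of `F Y` lies below `F_* n` iff
`⊤ ≤ ○_{P.arrow} n`; being a right adjoint, `○_{P.arrow}` preserves infima, and taking
`P = ⨅ F_*(s)` yields `P ≤ F_*(⨅ s)`. -/

theorem exists_galoisConnection_of_map_sInf {α β : Type*} [CompleteSemilatticeInf α]
    [CompleteSemilatticeInf β] {u : β → α} (hu : ∀ s : Set β, u (sInf s) = sInf (u '' s)) :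
    ∃ l : α → β, GaloisConnection l u := by
  have u_mono : Monotone u := fun b b' hb => by
    have hpair : sInf {b, b'} = b := le_antisymm (sInf_le (Set.mem_insert _ _)) (by simp [hb])
    calc u b = sInf (u '' {b, b'}) := by rw [← hu, hpair]
      _ ≤ u b' := sInf_le (Set.mem_image_of_mem u (Set.mem_insert_of_mem _ rfl))
  refine ⟨fun a => sInf {b | a ≤ u b}, fun a b => ⟨fun h => ?_, fun h => sInf_le h⟩⟩
  calc a ≤ sInf (u '' {b | a ≤ u b}) := le_sInf (by simp)
    _ = u (sInf {b | a ≤ u b}) := (hu _).symm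
    _ ≤ u b := u_mono h

namespace CategoryTheory.Subobject

-- Mathlib's instance is polymorphic in the universe `w` bounding the index sets of the
-- wide pullbacks, which instance search cannot infer from `Subobject B`; here `w = v`.
noncomputable instance completeSemilatticeInfOfWellPowered [WellPowered.{v} C]
    [HasWidePullbacks.{v} C] {B : C} : CompleteSemilatticeInf (Subobject B) :=
  completeSemilatticeInf.{v}

theorem le_iff_factors_arrow {B : C} {P Q : Subobject B} : P ≤ Q ↔ Q.Factors P.arrow :=
  ⟨fun h => factors_of_le _ h P.factors_self, le_of_factors⟩

theorem factors_sInf_iff [WellPowered.{v} C] [HasWidePullbacks.{v} C] {A B : C}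
    {s : Set (Subobject B)} {g : A ⟶ B} : (InfSet.sInf s).Factors g ↔ ∀ P ∈ s, P.Factors g := by
  refine ⟨fun h P hP => factors_of_le g (_root_.sInf_le hP) h, fun h => ?_⟩
  have mem : ∀ j : equivShrink.{v} (Subobject B) '' s,
      ((equivShrink.{v} (Subobject B)).symm j : Subobject B) ∈ s := by
    rintro ⟨-, t, ht, rfl⟩; simpa using ht
  let c : Cone (wideCospan.{v} s) :=
    WidePullbackShape.mkCone g (fun j => factorThru _ g (h _ (mem j)))
      (fun j => factorThru_arrow _ _ _)
  show (Subobject.sInf.{v} s).Factors g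
  rw [Subobject.sInf, mk_factors_iff]
  exact ⟨limit.lift _ c, limit.lift_π c none⟩

theorem le_pullback_iff [HasPullbacks C] {X Y : C} (f : X ⟶ Y) (P : Subobject X)
    (Q : Subobject Y) : P ≤ (pullback f).obj Q ↔ Q.Factors (P.arrow ≫ f) :=
  le_iff_factors_arrow.trans (pullback_factors_iff f Q P.arrow)

theorem top_le_pullback_iff [HasPullbacks C] {X Y : C} (f : X ⟶ Y) (Q : Subobject Y) :
    ⊤ ≤ (pullback f).obj Q ↔ Q.Factors f := by
  rw [le_pullback_iff]
  exact ⟨fun h => by simpa using factors_of_factors_right (inv (⊤ : Subobject X).arrow) h,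
    factors_of_factors_right _⟩

theorem pullback_sInf [WellPowered.{v} C] [HasWidePullbacks.{v} C] {X Y : C} (f : X ⟶ Y)
    (s : Set (Subobject Y)) :
    (pullback f).obj (InfSet.sInf s) = InfSet.sInf ((pullback f).obj '' s) :=
  eq_of_forall_le_iff fun P => by
    simp only [le_pullback_iff, factors_sInf_iff, _root_.le_sInf_iff, Set.forall_mem_image]

end CategoryTheory.Subobject

theorem subMap_monotone {F : C ⥤ C} (hF : PreservesMonos F) {Y : C} :
    Monotone (subMap hF (Y := Y)) := fun m n h => by
  have := hF m.arrow inferInstance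
  have := hF n.arrow inferInstance
  refine Subobject.mk_le_mk_of_comm (F.map (Subobject.ofLE m n h)) ?_
  rw [← F.map_comp, Subobject.ofLE_arrow]

theorem le_subMap_iff_top_le_nextTime [HasPullbacks C] {F : C ⥤ C} (hF : PreservesMonos F)
    {Y : C} (P : Subobject (F.obj Y)) (n : Subobject Y) :
    P ≤ subMap hF n ↔ ⊤ ≤ nextTime hF P.arrow n :=
  Subobject.le_iff_factors_arrow.trans (Subobject.top_le_pullback_iff _ _).symm

theorem nextTime_sInf [WellPowered.{v} C] [HasWidePullbacks.{v} C] {F : C ⥤ C}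
    {hF : PreservesMonos F} (hPI : PreservesIntersections hF) {X Y : C} (f : X ⟶ F.obj Y)
    (s : Set (Subobject Y)) : nextTime hF f (sInf s) = sInf (nextTime hF f '' s) := by
  rw [nextTime, hPI, Subobject.pullback_sInf, Set.image_image]
  rfl

/-- A mono-preserving functor preserves intersections iff for every `f : X ⟶ F.obj Y` the
"next time" operator `○_f : Subobject Y → Subobject X` has a left adjoint, i.e.\ there is a
map `l : Subobject X → Subobject Y` forming a Galois connection with `○_f`. -/
theorem preservesIntersections_iff_nextTime_hasLeftAdjoint
    [WellPowered.{v} C] [HasWidePullbacks.{v} C]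
    (F : C ⥤ C) (hF : PreservesMonos F) :
    PreservesIntersections hF ↔
      ∀ ⦃X Y : C⦄ (f : X ⟶ F.obj Y),
        ∃ l : Subobject X → Subobject Y, GaloisConnection l (nextTime hF f) := by
  refine ⟨fun hPI X Y f => exists_galoisConnection_of_map_sInf (nextTime_sInf hPI f),
    fun hAdj Y s => le_antisymm ?_ ?_⟩
  · exact le_sInf fun _ ⟨n, hn, hmap⟩ => hmap ▸ subMap_monotone hF (sInf_le hn)
  · set P := sInf (subMap hF '' s)
    obtain ⟨l, hl⟩ := hAdj P.arrow
    have hP : ∀ n ∈ s, l ⊤ ≤ n := fun n hn =>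
      hl.l_le ((le_subMap_iff_top_le_nextTime hF P n).mp (sInf_le ⟨n, hn, rfl⟩))
    exact (le_subMap_iff_top_le_nextTime hF P _).mpr (hl.le_u (le_sInf hP))
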